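/- arXiv:1801.08111 — 2 statements merged into one kernel-verified Lean document; each statement's English description precedes it below -/
import Mathlib

section
/- Let C be a ℂ-linear ring category that is rigid (every object admits a left dual and a right dual). Then C has separable triple products. -/
open CategoryTheory CategoryTheory.Limits CategoryTheory.MonoidalCategory

universe v u v₂ u₂

/-- A system of renormalized r-matrices on a monoidal category. -/
structure RMatrixSystem (C : Type u) [Category.{v} C] [Preadditive C]
    [MonoidalCategory C] where
  R : ∀ M N : C, M ⊗ N ⟶ N ⊗ M
  deg : C → C → WithBot ℤ
  R_unit_right : ∀ M : C, R M (𝟙_ C) = (ρ_ M).hom ≫ (λ_ M).inv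
  R_unit_left : ∀ M : C, R (𝟙_ C) M = (λ_ M).hom ≫ (ρ_ M).inv
  R_ne_zero_iff : ∀ M N : C, R M N ≠ 0 ↔ deg M N ≠ ⊥
  deg_tensor_right_le : ∀ M N₁ N₂ : C, deg M (N₁ ⊗ N₂) ≤ deg M N₁ + deg M N₂
  R_tensor_right_of_eq : ∀ M N₁ N₂ : C, deg M (N₁ ⊗ N₂) = deg M N₁ + deg M N₂ →
      R M (N₁ ⊗ N₂) = (α_ M N₁ N₂).inv ≫ (R M N₁ ▷ N₂) ≫ (α_ N₁ M N₂).hom ≫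
        (N₁ ◁ R M N₂) ≫ (α_ N₁ N₂ M).inv
  R_tensor_right_of_lt : ∀ M N₁ N₂ : C, deg M (N₁ ⊗ N₂) < deg M N₁ + deg M N₂ →
      (α_ M N₁ N₂).inv ≫ (R M N₁ ▷ N₂) ≫ (α_ N₁ M N₂).hom ≫
        (N₁ ◁ R M N₂) ≫ (α_ N₁ N₂ M).inv = 0
  deg_tensor_left_le : ∀ M N₁ N₂ : C, deg (N₁ ⊗ N₂) M ≤ deg N₁ M + deg N₂ M
  R_tensor_left_of_eq : ∀ M N₁ N₂ : C, deg (N₁ ⊗ N₂) M = deg N₁ M + deg N₂ M →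
      R (N₁ ⊗ N₂) M = (α_ N₁ N₂ M).hom ≫ (N₁ ◁ R N₂ M) ≫ (α_ N₁ M N₂).inv ≫
        (R N₁ M ▷ N₂) ≫ (α_ M N₁ N₂).hom
  R_tensor_left_of_lt : ∀ M N₁ N₂ : C, deg (N₁ ⊗ N₂) M < deg N₁ M + deg N₂ M →
      (α_ N₁ N₂ M).hom ≫ (N₁ ◁ R N₂ M) ≫ (α_ N₁ M N₂).inv ≫
        (R N₁ M ▷ N₂) ≫ (α_ M N₁ N₂).hom = 0
  deg_add_nonneg : ∀ M N : C, 0 ≤ deg M N + deg N M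
  comp_ne_zero_iff : ∀ M N : C, R M N ≫ R N M ≠ 0 ↔ deg M N + deg N M = 0
  R_nat_of_eq_right : ∀ (M N₁ N₂ : C) (f : N₁ ⟶ N₂), deg M N₁ = deg M N₂ →
      R M N₁ ≫ (f ▷ M) = (M ◁ f) ≫ R M N₂
  R_nat_of_lt_right : ∀ (M N₁ N₂ : C) (f : N₁ ⟶ N₂), deg M N₁ < deg M N₂ →
      (M ◁ f) ≫ R M N₂ = 0
  R_nat_of_gt_right : ∀ (M N₁ N₂ : C) (f : N₁ ⟶ N₂), deg M N₂ < deg M N₁ →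
      R M N₁ ≫ (f ▷ M) = 0
  R_nat_of_eq_left : ∀ (M N₁ N₂ : C) (f : N₁ ⟶ N₂), deg N₁ M = deg N₂ M →
      R N₁ M ≫ (M ◁ f) = (f ▷ M) ≫ R N₂ M
  R_nat_of_lt_left : ∀ (M N₁ N₂ : C) (f : N₁ ⟶ N₂), deg N₁ M < deg N₂ M →
      (f ▷ M) ≫ R N₂ M = 0
  R_nat_of_gt_left : ∀ (M N₁ N₂ : C) (f : N₁ ⟶ N₂), deg N₂ M < deg N₁ M →
      R N₁ M ≫ (M ◁ f) = 0

/-- `C` has separable triple products. -/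
def SeparableTripleProducts (C : Type u) [Category.{v} C] [MonoidalCategory C] : Prop :=
  (∀ (M₁ M₂ M₃ X Y : C) (x : X ⟶ M₁ ⊗ M₂) (y : Y ⟶ M₂ ⊗ M₃), Mono x → Mono y →
    (∃ h : X ⊗ M₃ ⟶ M₁ ⊗ Y, h ≫ ((M₁ ◁ y) ≫ (α_ M₁ M₂ M₃).inv) = x ▷ M₃) →
    ∃ (N : C) (n : N ⟶ M₂), Mono n ∧ (∃ g : X ⟶ M₁ ⊗ N, g ≫ (M₁ ◁ n) = x) ∧
      (∃ g' : N ⊗ M₃ ⟶ Y, g' ≫ y = n ▷ M₃)) ∧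
  (∀ (M₁ M₂ M₃ X Y : C) (x : X ⟶ M₁ ⊗ M₂) (y : Y ⟶ M₂ ⊗ M₃), Mono x → Mono y →
    (∃ h : M₁ ⊗ Y ⟶ X ⊗ M₃, h ≫ ((x ▷ M₃) ≫ (α_ M₁ M₂ M₃).hom) = M₁ ◁ y) →
    ∃ (N : C) (n : N ⟶ M₂), Mono n ∧ (∃ g' : Y ⟶ N ⊗ M₃, g' ≫ (n ▷ M₃) = y) ∧
      (∃ g : M₁ ⊗ N ⟶ X, g ≫ x = M₁ ◁ n))


section Helpers

variable {C : Type u} [Category.{v} C] [Preadditive C] [MonoidalCategory C]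
    [MonoidalPreadditive C]

private lemma tREquiv_zero (X Y Y' Z : C) [ExactPairing Y Y'] :
    (tensorRightHomEquiv X Y Y' Z) 0 = 0 := by
  simp [tensorRightHomEquiv]

private lemma tREquiv_symm_zero (X Y Y' Z : C) [ExactPairing Y Y'] :
    (tensorRightHomEquiv X Y Y' Z).symm 0 = 0 := by
  simp [tensorRightHomEquiv]

private lemma tLEquiv_zero (X Y Y' Z : C) [ExactPairing Y Y'] :
    (tensorLeftHomEquiv X Y Y' Z) 0 = 0 := by
  simp [tensorLeftHomEquiv]

private lemma tLEquiv_symm_zero (X Y Y' Z : C) [ExactPairing Y Y'] :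
    (tensorLeftHomEquiv X Y Y' Z).symm 0 = 0 := by
  simp [tensorLeftHomEquiv]

end Helpers

section HalfProofs

variable {C : Type u} [Category.{v} C] [Abelian C] [MonoidalCategory C]
    [MonoidalPreadditive C]
    [∀ X : C, PreservesFiniteLimits (tensorLeft X)]
    [∀ X : C, PreservesFiniteLimits (tensorRight X)]
    [RigidCategory C]

private lemma stp_first (M₁ M₂ M₃ X Y : C) (x : X ⟶ M₁ ⊗ M₂) (y : Y ⟶ M₂ ⊗ M₃)
    (hy : Mono y)
    (hh : ∃ h : X ⊗ M₃ ⟶ M₁ ⊗ Y, h ≫ ((M₁ ◁ y) ≫ (α_ M₁ M₂ M₃).inv) = x ▷ M₃) :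
    ∃ (N : C) (n : N ⟶ M₂), Mono n ∧ (∃ g : X ⟶ M₁ ⊗ N, g ≫ (M₁ ◁ n) = x) ∧
      (∃ g' : N ⊗ M₃ ⟶ Y, g' ≫ y = n ▷ M₃) := by
  haveI := hy
  obtain ⟨h, hh⟩ := hh
  set c : M₂ ⊗ M₃ ⟶ cokernel y := cokernel.π y with hc
  set qm : M₂ ⟶ cokernel y ⊗ (M₃ᘁ) := tensorRightHomEquiv M₂ M₃ (M₃ᘁ) (cokernel y) c with hqm
  refine ⟨kernel qm, kernel.ι qm, inferInstance, ?_, ?_⟩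
  · have hqsymm : (tensorRightHomEquiv M₂ M₃ (M₃ᘁ) (cokernel y)).symm qm = c :=
      Equiv.symm_apply_apply _ _
    have key : x ≫ (M₁ ◁ qm) = 0 := by
      have e1 : (tensorRightHomEquiv X M₃ (M₃ᘁ) (M₁ ⊗ cokernel y)).symm
          (x ≫ ((M₁ ◁ qm) ≫ (α_ M₁ (cokernel y) (M₃ᘁ)).inv)) =
          (x ▷ M₃) ≫ (α_ M₁ M₂ M₃).hom ≫ (M₁ ◁ c) := by
        rw [tensorRightHomEquiv_symm_naturality]
        congr 1
        have := tensorRightHomEquiv_tensor (X := M₂) (X' := M₁) (Y := M₃) (Y' := (M₃ᘁ))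
          (Z := cokernel y) (Z' := M₁) qm (𝟙 M₁)
        simp only [id_tensorHom, tensorHom_id, hqsymm] at this
        simpa using this
      have e2 : (x ▷ M₃) ≫ (α_ M₁ M₂ M₃).hom ≫ (M₁ ◁ c) = 0 := by
        rw [← hh]
        simp [← MonoidalCategory.whiskerLeft_comp, hc]
      rw [e2] at e1
      have := congrArg (tensorRightHomEquiv X M₃ (M₃ᘁ) (M₁ ⊗ cokernel y)) e1
      rw [Equiv.apply_symm_apply, tREquiv_zero] at this
      have : x ≫ (M₁ ◁ qm) = (0 : X ⟶ (M₁ ⊗ cokernel y) ⊗ (M₃ᘁ)) ≫ (α_ _ _ _).hom := by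
        rw [← this]; simp
      simpa using this
    have hx0 : x ≫ (tensorLeft M₁).map qm = 0 := key
    refine ⟨kernel.lift ((tensorLeft M₁).map qm) x hx0 ≫
      inv (kernelComparison qm (tensorLeft M₁)), ?_⟩
    have hmap : (M₁ ◁ kernel.ι qm) = (tensorLeft M₁).map (kernel.ι qm) := rfl
    have hinv : inv (kernelComparison qm (tensorLeft M₁)) ≫ (tensorLeft M₁).map (kernel.ι qm) =
        kernel.ι ((tensorLeft M₁).map qm) := by
      rw [IsIso.inv_comp_eq, kernelComparison_comp_ι]
    rw [hmap, Category.assoc, hinv, kernel.lift_ι]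
  · have h0 : (kernel.ι qm ▷ M₃) ≫ c = 0 := by
      have := tensorRightHomEquiv_symm_naturality (Y := M₃) (Y' := (M₃ᘁ)) (kernel.ι qm) qm
      rw [kernel.condition, tREquiv_symm_zero, Equiv.symm_apply_apply] at this
      exact this.symm
    exact ⟨Abelian.monoLift y _ h0, Abelian.monoLift_comp y _ h0⟩

private lemma stp_second (M₁ M₂ M₃ X Y : C) (x : X ⟶ M₁ ⊗ M₂) (y : Y ⟶ M₂ ⊗ M₃)
    (hx : Mono x)
    (hh : ∃ h : M₁ ⊗ Y ⟶ X ⊗ M₃, h ≫ ((x ▷ M₃) ≫ (α_ M₁ M₂ M₃).hom) = M₁ ◁ y) :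
    ∃ (N : C) (n : N ⟶ M₂), Mono n ∧ (∃ g' : Y ⟶ N ⊗ M₃, g' ≫ (n ▷ M₃) = y) ∧
      (∃ g : M₁ ⊗ N ⟶ X, g ≫ x = M₁ ◁ n) := by
  haveI := hx
  obtain ⟨h, hh⟩ := hh
  set c : M₁ ⊗ M₂ ⟶ cokernel x := cokernel.π x with hc
  set qm : M₂ ⟶ (ᘁM₁) ⊗ cokernel x :=
    tensorLeftHomEquiv M₂ (ᘁM₁) M₁ (cokernel x) c with hqm
  refine ⟨kernel qm, kernel.ι qm, inferInstance, ?_, ?_⟩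
  · have hqsymm : (tensorLeftHomEquiv M₂ (ᘁM₁) M₁ (cokernel x)).symm qm = c :=
      Equiv.symm_apply_apply _ _
    have key : y ≫ (qm ▷ M₃) = 0 := by
      have e1 : (tensorLeftHomEquiv Y (ᘁM₁) M₁ (cokernel x ⊗ M₃)).symm
          (y ≫ ((qm ▷ M₃) ≫ (α_ (ᘁM₁) (cokernel x) M₃).hom)) =
          (M₁ ◁ y) ≫ (α_ M₁ M₂ M₃).inv ≫ (c ▷ M₃) := by
        rw [tensorLeftHomEquiv_symm_naturality]
        congr 1
        have := tensorLeftHomEquiv_tensor (X := M₂) (X' := M₃) (Y := (ᘁM₁)) (Y' := M₁)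
          (Z := cokernel x) (Z' := M₃) qm (𝟙 M₃)
        simp only [id_tensorHom, tensorHom_id, hqsymm] at this
        simpa using this
      have e2 : (M₁ ◁ y) ≫ (α_ M₁ M₂ M₃).inv ≫ (c ▷ M₃) = 0 := by
        rw [← hh]
        simp [← comp_whiskerRight, hc]
      rw [e2] at e1
      have := congrArg (tensorLeftHomEquiv Y (ᘁM₁) M₁ (cokernel x ⊗ M₃)) e1
      rw [Equiv.apply_symm_apply, tLEquiv_zero] at this
      rw [← cancel_mono (α_ (ᘁM₁) (cokernel x) M₃).hom]
      simpa using this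
    have hy0 : y ≫ (tensorRight M₃).map qm = 0 := key
    refine ⟨kernel.lift ((tensorRight M₃).map qm) y hy0 ≫
      inv (kernelComparison qm (tensorRight M₃)), ?_⟩
    have hmap : (kernel.ι qm ▷ M₃) = (tensorRight M₃).map (kernel.ι qm) := rfl
    have hinv : inv (kernelComparison qm (tensorRight M₃)) ≫ (tensorRight M₃).map (kernel.ι qm) =
        kernel.ι ((tensorRight M₃).map qm) := by
      rw [IsIso.inv_comp_eq, kernelComparison_comp_ι]
    rw [hmap, Category.assoc, hinv, kernel.lift_ι]
  · have h0 : (M₁ ◁ kernel.ι qm) ≫ c = 0 := by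
      have := tensorLeftHomEquiv_symm_naturality (Y := (ᘁM₁)) (Y' := M₁) (kernel.ι qm) qm
      rw [kernel.condition, tLEquiv_symm_zero, Equiv.symm_apply_apply] at this
      exact this.symm
    exact ⟨Abelian.monoLift x _ h0, Abelian.monoLift_comp x _ h0⟩

end HalfProofs

/-- A rigid ℂ-linear ring category has separable triple products. -/
theorem separableTripleProducts_of_rigid {C : Type u} [Category.{v} C] [Abelian C]
    [CategoryTheory.Linear ℂ C] [MonoidalCategory C] [MonoidalPreadditive C]
    [MonoidalLinear ℂ C]
    -- local finiteness: all objects have finite length ...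
    [∀ X : C, IsNoetherianObject X] [∀ X : C, IsArtinianObject X]
    -- ... and all Hom spaces are finite dimensional over ℂ
    [∀ X Y : C, FiniteDimensional ℂ (X ⟶ Y)]
    -- the monoidal product is exact in each variable
    [∀ X : C, PreservesFiniteLimits (tensorLeft X)]
    [∀ X : C, PreservesFiniteColimits (tensorLeft X)]
    [∀ X : C, PreservesFiniteLimits (tensorRight X)]
    [∀ X : C, PreservesFiniteColimits (tensorRight X)]
    -- End(1) = ℂ · id
    (hEnd : ∀ f : (𝟙_ C) ⟶ (𝟙_ C), ∃ c : ℂ, f = c • 𝟙 (𝟙_ C))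
    -- rigidity
    [RigidCategory C] :
    SeparableTripleProducts C := by
  constructor
  · intro M₁ M₂ M₃ X Y x y hx hy hh
    exact stp_first M₁ M₂ M₃ X Y x y hy hh
  · intro M₁ M₂ M₃ X Y x y hx hy hh
    exact stp_second M₁ M₂ M₃ X Y x y hx hh
end

section
/- For every integer n ≥ 1: the matrix L_n is skew-symmetric, the principal part of B̃_n is skew-symmetric, and the product L_n B̃_n satisfies (L_n B̃_n)_{(k₁,ℓ₁),(k₂,ℓ₂)} = 2 if (k₁,ℓ₁) = (k₂,ℓ₂) and (L_n B̃_n)_{(k₁,ℓ₁),(k₂,ℓ₂)} = 0 otherwise, for all (k₁,ℓ₁) ∈ I and (k₂,ℓ₂) ∈ I_ex. In particular (L_n, B̃_n) is a compatible pair and the principal part of L_n B̃_n equals twice the identity matrix. -/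
/-!
Writing `r = (j, ℓ)`, the entry `(L_n B̃_n)_{(k₁,ℓ₁),(k₂,ℓ₂)}` factorises as
`2 · (∑_ℓ (ℓ - ℓ₁)(ℓ - ℓ₂)) · (∑_j min(k₁, j) a_{j k₂})`. Over `ℓ ∈ {0,1}` the first sum is
`δ_{ℓ₁ℓ₂}`. The second is the negative second difference at `k₂` of the concave function
`j ↦ min(k₁, j)` (extended by `0` at `j = 0`), whose only kink is at `j = k₁`; hence it is
`δ_{k₁k₂}`, provided the neighbour `k₂ + 1` is still an index, i.e. `k₂ < n`.
-/

/-- The type-`A_{n+1}`-style tridiagonal Cartan matrix entries on `{1,…,n}`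
(indices encoded as `Fin n` shifted by one): `2` on the diagonal, `-1` on the
off-diagonals, `0` elsewhere. -/
def cartanA (n : ℕ) (k₁ k₂ : Fin n) : ℤ :=
  if (k₁ : ℕ) = (k₂ : ℕ) then 2
  else if (k₁ : ℕ) + 1 = (k₂ : ℕ) ∨ (k₂ : ℕ) + 1 = (k₁ : ℕ) then -1 else 0

/-- The exchange matrix `B̃_n`: `b_{(k₁,ℓ₁),(k₂,ℓ₂)} = (ℓ₁ - ℓ₂)·a_{k₁k₂}`. -/
def Bmat (n : ℕ) (p q : Fin n × Fin 2) : ℤ :=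
  ((p.2 : ℕ) - (q.2 : ℕ) : ℤ) * cartanA n p.1 q.1

/-- The matrix `L_n`: `λ_{(k₁,ℓ₁),(k₂,ℓ₂)} = 2(ℓ₂ - ℓ₁)·min(k₁,k₂)` (with `k = val + 1`). -/
def Lmat (n : ℕ) (p q : Fin n × Fin 2) : ℤ :=
  2 * ((q.2 : ℕ) - (p.2 : ℕ) : ℤ) * (min ((p.1 : ℕ) + 1) ((q.1 : ℕ) + 1) : ℤ)

/-- The exchangeable indices: those `(k,ℓ)` with `k ∈ {1,…,n-1}` (i.e. `k = val + 1 < n`);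
the frozen ones are `(n,0)`, `(n,1)`. -/
def isExch (n : ℕ) (p : Fin n × Fin 2) : Prop := (p.1 : ℕ) + 1 < n

lemma cartanA_comm (n : ℕ) (i j : Fin n) : cartanA n i j = cartanA n j i := by
  unfold cartanA
  split_ifs <;> omega

lemma Lmat_skew (n : ℕ) (p q : Fin n × Fin 2) : Lmat n p q = -Lmat n q p := by
  unfold Lmat
  rw [min_comm]
  ring

lemma Bmat_skew (n : ℕ) (p q : Fin n × Fin 2) : Bmat n p q = -Bmat n q p := by
  unfold Bmat
  rw [cartanA_comm]
  ring

lemma cartanA_eq_indicator (n : ℕ) (j m : Fin n) :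
    cartanA n j m = (if (j : ℕ) = m then 2 else 0) - (if (j : ℕ) + 1 = m then 1 else 0)
      - (if (j : ℕ) = m + 1 then 1 else 0) := by
  unfold cartanA
  split_ifs <;> omega

/-- Away from the last index, the Cartan matrix acts as the negative second difference;
`h 0 = 0` plays the role of the boundary value at the missing index `-1`. -/
lemma sum_mul_cartanA (n : ℕ) (h : ℕ → ℤ) (h0 : h 0 = 0) (m : Fin n) (hm : (m : ℕ) + 1 < n) :
    ∑ j : Fin n, h (j + 1) * cartanA n j m = 2 * h (m + 1) - h m - h (m + 2) := by
  have hshift : ∑ j ∈ Finset.range n, (if j + 1 = (m : ℕ) then h (j + 1) else 0) = h m := by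
    have := Finset.sum_range_succ' (fun j ↦ if j = (m : ℕ) then h j else 0) n
    simp only [Finset.sum_ite_eq', Finset.mem_range, h0, ite_self, add_zero] at this
    rw [← this, if_pos (by omega)]
  simp only [cartanA_eq_indicator, mul_sub, mul_ite, mul_one, mul_zero, Finset.sum_sub_distrib,
    Fin.sum_univ_eq_sum_range (fun j ↦ if j = (m : ℕ) then h (j + 1) * 2 else 0),
    Fin.sum_univ_eq_sum_range (fun j ↦ if j + 1 = (m : ℕ) then h (j + 1) else 0),
    Fin.sum_univ_eq_sum_range (fun j ↦ if j = (m : ℕ) + 1 then h (j + 1) else 0),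
    Finset.sum_ite_eq', Finset.mem_range, hshift, if_pos m.isLt, if_pos hm]
  ring

lemma two_mul_min_sub_min_sub_min (k m : ℤ) :
    2 * min k (m + 1) - min k m - min k (m + 2) = if k = m + 1 then 1 else 0 := by
  split_ifs <;> omega

lemma sum_min_mul_cartanA (n : ℕ) (k m : Fin n) (hm : (m : ℕ) + 1 < n) :
    ∑ j : Fin n, (min ((k : ℕ) + 1) ((j : ℕ) + 1) : ℤ) * cartanA n j m =
      if k = m then 1 else 0 := by
  have := sum_mul_cartanA n (fun j ↦ min ((k : ℤ) + 1) j) (min_eq_right (by positivity)) m hm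
  push_cast at this
  rw [this, two_mul_min_sub_min_sub_min]
  simp [Fin.ext_iff]

lemma sum_sub_mul_sub_fin_two (a b : Fin 2) :
    ∑ ℓ : Fin 2, (((ℓ : ℕ) - (a : ℕ) : ℤ) * ((ℓ : ℕ) - (b : ℕ))) = if a = b then 1 else 0 := by
  fin_cases a <;> fin_cases b <;> simp

lemma sum_Lmat_mul_Bmat (n : ℕ) (p q : Fin n × Fin 2) :
    ∑ r : Fin n × Fin 2, Lmat n p r * Bmat n r q
      = 2 * ((∑ j : Fin n, (min ((p.1 : ℕ) + 1) ((j : ℕ) + 1) : ℤ) * cartanA n j q.1)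
        * ∑ ℓ : Fin 2, (((ℓ : ℕ) - (p.2 : ℕ) : ℤ) * ((ℓ : ℕ) - (q.2 : ℕ)))) := by
  rw [Fintype.sum_prod_type, Finset.sum_mul_sum, Finset.mul_sum]
  refine Finset.sum_congr rfl fun j _ ↦ ?_
  rw [Finset.mul_sum]
  refine Finset.sum_congr rfl fun ℓ _ ↦ ?_
  unfold Lmat Bmat
  ring

theorem Lmat_Bmat_compatible_general (n : ℕ) :
    (∀ p q : Fin n × Fin 2, Lmat n p q = - Lmat n q p) ∧
    (∀ p q : Fin n × Fin 2, isExch n p → isExch n q → Bmat n p q = - Bmat n q p) ∧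
    (∀ p q : Fin n × Fin 2, isExch n q →
      (∑ r : Fin n × Fin 2, Lmat n p r * Bmat n r q) = if p = q then 2 else 0) := by
  refine ⟨Lmat_skew n, fun p q _ _ ↦ Bmat_skew n p q, fun p q hq ↦ ?_⟩
  rw [sum_Lmat_mul_Bmat, sum_min_mul_cartanA n p.1 q.1 hq, sum_sub_mul_sub_fin_two]
  by_cases h₁ : p.1 = q.1 <;> by_cases h₂ : p.2 = q.2 <;> simp [h₁, h₂, Prod.ext_iff]

/-- **Statement 17.** `L_n` is skew-symmetric, the principal part of `B̃_n` is
skew-symmetric, and `L_n B̃_n` is twice the identity on the principal part and zero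
elsewhere; in particular `(L_n, B̃_n)` is a compatible pair. -/
theorem Lmat_Bmat_compatible (n : ℕ) (hn : 1 ≤ n) :
    (∀ p q : Fin n × Fin 2, Lmat n p q = - Lmat n q p) ∧
    (∀ p q : Fin n × Fin 2, isExch n p → isExch n q → Bmat n p q = - Bmat n q p) ∧
    (∀ p q : Fin n × Fin 2, isExch n q →
      (∑ r : Fin n × Fin 2, Lmat n p r * Bmat n r q) = if p = q then 2 else 0) :=
  Lmat_Bmat_compatible_general n
end
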